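/- Let f : ℝ^{n1×n2} → ℝ be differentiable and (L, 2r)-restricted smooth for some L > 0. Let B ∈ ℝ^{n1×r} and R ∈ ℝ^{n2×r}, set X := B Rᵀ, let λ > 0, and set P := RᵀR + λ I_r (which is symmetric positive definite). Let D := ∇f(X) R P^{-1} and let 0 < η ≤ 1/L. Suppose there exist µ > 0 and f⋆ ∈ ℝ such that ‖∇f(X) R P^{-1/2}‖_F² ≥ (µ²/(6L)) (f(X) − f⋆). Then f((B − η D) Rᵀ) − f⋆ ≤ (1 − (η − L η²/2) µ²/(6L)) (f(X) − f⋆). -/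

import Mathlib

open Matrix

/-- Frobenius inner product of two real matrices. -/
noncomputable def finner {m n : Type*} [Fintype m] [Fintype n]
    (A B : Matrix m n ℝ) : ℝ := (Aᵀ * B).trace

/-- Frobenius norm of a real matrix. -/
noncomputable def fnorm {m n : Type*} [Fintype m] [Fintype n]
    (A : Matrix m n ℝ) : ℝ := Real.sqrt (finner A A)

open scoped Classical in
/-- Square root of a positive semidefinite real matrix (junk value `0` otherwise). -/
noncomputable def psqrt {r : ℕ} (M : Matrix (Fin r) (Fin r) ℝ) : Matrix (Fin r) (Fin r) ℝ :=
  if h : M.PosSemidef then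
    h.1.eigenvectorUnitary.1 * diagonal (Real.sqrt ∘ h.1.eigenvalues) *
      (star h.1.eigenvectorUnitary : Matrix (Fin r) (Fin r) ℝ)
  else 0

/-!
Write `G = ∇f(X)` and `Δ = D Rᵀ`, so that the new iterate is `X - η Δ`, again of rank at most `r`.
Restricted smoothness gives `f(X - η Δ) ≤ f(X) - η ⟨G, Δ⟩ + L η² ‖Δ‖² / 2`. Since
`P⁻¹ = P^{-1/2} P^{-1/2}` with `P^{-1/2}` symmetric, `⟨G, Δ⟩ = ‖G R P^{-1/2}‖²`; and
`‖Δ‖² = ⟨D, D RᵀR⟩ ≤ ⟨D, D P⟩ = ⟨G, Δ⟩`, the damping `λ I` only adding `λ ‖D‖² ≥ 0`.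
Hence one step decreases `f` by at least `(η - L η² / 2) ‖G R P^{-1/2}‖²`, which the PL-type
inequality turns into a contraction of the gap `f - f⋆`.
-/

section Frobenius

variable {m n k : Type*} [Fintype m] [Fintype n] [Fintype k]

lemma finner_comm (A B : Matrix m n ℝ) : finner A B = finner B A := by
  rw [finner, finner, ← trace_transpose, transpose_mul, transpose_transpose]

lemma finner_mul_transpose (A : Matrix m n ℝ) (B : Matrix m k ℝ) (C : Matrix n k ℝ) :
    finner A (B * Cᵀ) = finner (A * C) B := by
  rw [finner, finner, transpose_mul, ← Matrix.mul_assoc, trace_mul_comm, Matrix.mul_assoc]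

lemma finner_add_right (A B C : Matrix m n ℝ) : finner A (B + C) = finner A B + finner A C := by
  rw [finner, finner, finner, Matrix.mul_add, trace_add]

lemma finner_smul_right (c : ℝ) (A B : Matrix m n ℝ) : finner A (c • B) = c * finner A B := by
  rw [finner, finner, Matrix.mul_smul, trace_smul, smul_eq_mul]

lemma finner_self_nonneg (A : Matrix m n ℝ) : 0 ≤ finner A A :=
  Finset.sum_nonneg fun _ _ => Finset.sum_nonneg fun _ _ => mul_self_nonneg _

lemma fnorm_sq (A : Matrix m n ℝ) : fnorm A ^ 2 = finner A A :=
  Real.sq_sqrt (finner_self_nonneg A)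

lemma fnorm_smul_sq (c : ℝ) (A : Matrix m n ℝ) : fnorm (c • A) ^ 2 = c ^ 2 * fnorm A ^ 2 := by
  rw [fnorm_sq, fnorm_sq, finner_smul_right, finner_comm, finner_smul_right, finner_comm]
  ring

end Frobenius

section SquareRoot

variable {r : ℕ} {M : Matrix (Fin r) (Fin r) ℝ}

lemma psqrt_eq (hM : M.PosSemidef) :
    psqrt M = hM.1.eigenvectorUnitary.1 * diagonal (Real.sqrt ∘ hM.1.eigenvalues) *
      (star hM.1.eigenvectorUnitary : Matrix (Fin r) (Fin r) ℝ) :=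
  dif_pos hM

lemma transpose_psqrt (hM : M.PosSemidef) : (psqrt M)ᵀ = psqrt M := by
  rw [psqrt_eq hM, ← conjTranspose_eq_transpose_of_trivial]
  simp [Matrix.mul_assoc, star_eq_conjTranspose]

lemma psqrt_mul_self (hM : M.PosSemidef) : psqrt M * psqrt M = M := by
  set U : Matrix (Fin r) (Fin r) ℝ := hM.1.eigenvectorUnitary.1
  set Λ : Matrix (Fin r) (Fin r) ℝ := diagonal (Real.sqrt ∘ hM.1.eigenvalues)
  have hU : star U * U = 1 := Matrix.UnitaryGroup.star_mul_self _
  have hΛ : Λ * Λ = diagonal hM.1.eigenvalues := by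
    rw [diagonal_mul_diagonal]
    exact congrArg diagonal (funext fun i => Real.mul_self_sqrt (hM.eigenvalues_nonneg i))
  calc psqrt M * psqrt M = U * (Λ * (star U * U) * Λ) * star U := by
        simp only [psqrt_eq hM, Matrix.mul_assoc]; rfl
    _ = U * diagonal hM.1.eigenvalues * star U := by rw [hU, Matrix.mul_one, hΛ, Matrix.mul_assoc]
    _ = M := hM.1.spectral_theorem.symm

end SquareRoot

lemma fnorm_mul_inv_sq {m k : Type*} [Fintype m] [Fintype k] [DecidableEq k]
    (A : Matrix m k ℝ) {S : Matrix k k ℝ} (hS : Sᵀ = S) :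
    fnorm (A * S⁻¹) ^ 2 = finner A (A * (S * S)⁻¹) := by
  have hSinv : S⁻¹ᵀ = S⁻¹ := by rw [transpose_nonsing_inv, hS]
  rw [fnorm_sq, ← finner_mul_transpose, hSinv, Matrix.mul_inv_rev, Matrix.mul_assoc]

section Damped

variable {m n k : Type*} [Fintype m] [Fintype n] [Fintype k] [DecidableEq k]

lemma posDef_transpose_mul_self_add_smul_one (R : Matrix n k ℝ) {lam : ℝ} (hlam : 0 < lam) :
    (Rᵀ * R + lam • (1 : Matrix k k ℝ)).PosDef := by
  refine PosDef.posSemidef_add ?_ (PosDef.one.smul hlam)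
  simpa only [conjTranspose_eq_transpose_of_trivial] using posSemidef_conjTranspose_mul_self R

lemma fnorm_mul_transpose_sq_le (D : Matrix m k ℝ) (R : Matrix n k ℝ) {lam : ℝ} (hlam : 0 ≤ lam) :
    fnorm (D * Rᵀ) ^ 2 ≤ finner D (D * (Rᵀ * R + lam • 1)) := by
  have hsplit : finner D (D * (Rᵀ * R + lam • 1)) = fnorm (D * Rᵀ) ^ 2 + lam * finner D D := by
    rw [Matrix.mul_add, finner_add_right, Matrix.mul_smul, Matrix.mul_one, finner_smul_right,
      fnorm_sq, finner_mul_transpose, finner_comm, Matrix.mul_assoc]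
  rw [hsplit]
  have := mul_nonneg hlam (finner_self_nonneg D)
  linarith

end Damped

lemma rank_mul_transpose_le {m n k : Type*} [Fintype n] [Fintype k] (M : Matrix m k ℝ)
    (R : Matrix n k ℝ) : (M * Rᵀ).rank ≤ Fintype.card k :=
  (rank_mul_le_left M Rᵀ).trans (rank_le_card_width M)

lemma gap_le_of_descent_of_PL {fX fnew fstar g q η L c : ℝ} (hL : 0 < L) (hη0 : 0 < η)
    (hη : η ≤ 1 / L) (hstep : fnew ≤ fX + -η * g + L / 2 * (η ^ 2 * q)) (hq : q ≤ g)
    (hPL : c * (fX - fstar) ≤ g) :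
    fnew - fstar ≤ (1 - (η - L * η ^ 2 / 2) * c) * (fX - fstar) := by
  have hLη : L * η ≤ 1 := by rwa [le_div_iff₀ hL, mul_comm] at hη
  have hrate : 0 ≤ η - L * η ^ 2 / 2 := by nlinarith
  have hcurv : L / 2 * (η ^ 2 * q) ≤ L / 2 * η ^ 2 * g := by
    rw [mul_assoc]; gcongr
  nlinarith [mul_le_mul_of_nonneg_left hPL hrate]

theorem stmt_3_general {n1 n2 r : ℕ}
    (f : Matrix (Fin n1) (Fin n2) ℝ → ℝ)
    (gradf : Matrix (Fin n1) (Fin n2) ℝ → Matrix (Fin n1) (Fin n2) ℝ)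
    (L : ℝ) (hL : 0 < L)
    (hsmooth : ∀ X1 X2 : Matrix (Fin n1) (Fin n2) ℝ, X1.rank ≤ 2 * r → X2.rank ≤ 2 * r →
      f X2 ≤ f X1 + finner (gradf X1) (X2 - X1) + L / 2 * fnorm (X2 - X1) ^ 2)
    (B : Matrix (Fin n1) (Fin r) ℝ) (R : Matrix (Fin n2) (Fin r) ℝ)
    (X : Matrix (Fin n1) (Fin n2) ℝ) (hX : X = B * Rᵀ)
    (lam : ℝ) (hlam : 0 < lam)
    (P : Matrix (Fin r) (Fin r) ℝ) (hP : P = Rᵀ * R + lam • (1 : Matrix (Fin r) (Fin r) ℝ))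
    (D : Matrix (Fin n1) (Fin r) ℝ) (hD : D = gradf X * R * P⁻¹)
    (η : ℝ) (hη0 : 0 < η) (hη : η ≤ 1 / L)
    (μ fstar : ℝ)
    (hPL : fnorm (gradf X * R * (psqrt P)⁻¹) ^ 2 ≥ μ ^ 2 / (6 * L) * (f X - fstar)) :
    f ((B - η • D) * Rᵀ) - fstar ≤
      (1 - (η - L * η ^ 2 / 2) * μ ^ 2 / (6 * L)) * (f X - fstar) := by
  have hPpd : P.PosDef := hP ▸ posDef_transpose_mul_self_add_smul_one R hlam
  have hDP : D * P = gradf X * R := by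
    rw [hD, Matrix.mul_assoc, nonsing_inv_mul _ ((isUnit_iff_isUnit_det P).1 hPpd.isUnit),
      Matrix.mul_one]
  have hdescent : finner (gradf X) (D * Rᵀ) = fnorm (gradf X * R * (psqrt P)⁻¹) ^ 2 := by
    rw [fnorm_mul_inv_sq _ (transpose_psqrt hPpd.posSemidef), psqrt_mul_self hPpd.posSemidef,
      hD, finner_mul_transpose, Matrix.mul_assoc]
  have hcurv : fnorm (D * Rᵀ) ^ 2 ≤ finner (gradf X) (D * Rᵀ) :=
    calc fnorm (D * Rᵀ) ^ 2 ≤ finner D (D * P) := hP ▸ fnorm_mul_transpose_sq_le D R hlam.le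
      _ = finner (gradf X) (D * Rᵀ) := by rw [hDP, finner_comm, finner_mul_transpose]
  have hrank : ∀ M : Matrix (Fin n1) (Fin r) ℝ, (M * Rᵀ).rank ≤ 2 * r := fun M =>
    (rank_mul_transpose_le M R).trans (by rw [Fintype.card_fin]; omega)
  have hnew : (B - η • D) * Rᵀ = X - η • (D * Rᵀ) := by rw [hX, Matrix.sub_mul, Matrix.smul_mul]
  have hstep := hsmooth X _ (hX ▸ hrank B) (hnew ▸ hrank _)
  rw [sub_sub_cancel_left, ← neg_smul, finner_smul_right, fnorm_smul_sq, neg_sq] at hstep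
  rw [hnew, mul_div_assoc]
  exact gap_le_of_descent_of_PL hL hη0 hη hstep hcurv (hdescent ▸ hPL)

/-- per-half-iteration contraction underlying the paper's Theorem 1,
matrix form.  Given restricted smoothness and a PL-type inequality in the damped
preconditioned norm, one damped-preconditioned factor update contracts the loss gap. -/
theorem stmt_3 {n1 n2 r : ℕ}
    (f : Matrix (Fin n1) (Fin n2) ℝ → ℝ)
    (gradf : Matrix (Fin n1) (Fin n2) ℝ → Matrix (Fin n1) (Fin n2) ℝ)
    (L : ℝ) (hL : 0 < L)
    (hdiff : ∀ X H : Matrix (Fin n1) (Fin n2) ℝ,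
      HasDerivAt (fun t : ℝ => f (X + t • H)) (finner (gradf X) H) 0)
    (hsmooth : ∀ X1 X2 : Matrix (Fin n1) (Fin n2) ℝ, X1.rank ≤ 2 * r → X2.rank ≤ 2 * r →
      f X2 ≤ f X1 + finner (gradf X1) (X2 - X1) + L / 2 * fnorm (X2 - X1) ^ 2)
    (B : Matrix (Fin n1) (Fin r) ℝ) (R : Matrix (Fin n2) (Fin r) ℝ)
    (X : Matrix (Fin n1) (Fin n2) ℝ) (hX : X = B * Rᵀ)
    (lam : ℝ) (hlam : 0 < lam)
    (P : Matrix (Fin r) (Fin r) ℝ) (hP : P = Rᵀ * R + lam • (1 : Matrix (Fin r) (Fin r) ℝ))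
    (D : Matrix (Fin n1) (Fin r) ℝ) (hD : D = gradf X * R * P⁻¹)
    (η : ℝ) (hη0 : 0 < η) (hη : η ≤ 1 / L)
    (μ fstar : ℝ) (hμ : 0 < μ)
    (hPL : fnorm (gradf X * R * (psqrt P)⁻¹) ^ 2 ≥ μ ^ 2 / (6 * L) * (f X - fstar)) :
    f ((B - η • D) * Rᵀ) - fstar ≤
      (1 - (η - L * η ^ 2 / 2) * μ ^ 2 / (6 * L)) * (f X - fstar) :=
  stmt_3_general f gradf L hL hsmooth B R X hX lam hlam P hP D hD η hη0 hη μ fstar hPL
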